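/- arXiv:1410.8671 — 3 statements merged into one kernel-verified Lean document; each statement's English description precedes it below -/
import Mathlib

section
/- Let A be a random q × d matrix with nonnegative bounded entries, independent of independent nonnegative random variables V₁, …, V_d with P(V_j > t) ~ K_j t^{-α}. Then for each i ∈ {1,…,q}, P((AV)_i > t) ~ (Σ_{j=1}^d K_j E[A_{ij}^α]) · t^{-α} as t → ∞, provided Σ_j K_j E[A_{ij}^α] > 0. -/
/-!
Conditioning on the finitely many values `a` of `A` reduces the claim to a fixed nonnegative row
`c = a i`, where `P(∑ c_j V_j > t) ~ (∑ K_j c_j^α) t^{-α}` is the single-big-jump principle.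
Independence turns `P(⋃_j {c_j V_j > t})` into `1 - ∏ (1 - p_j) ≥ ∑ p_j - (∑ p_j)²`, a lower
bound. Conversely, if the sum exceeds `t` then either one summand exceeds `(1 - ε) t` or two
summands exceed a fixed fraction of `ε t`, and the second event has probability `O(t^{-2α})`.
-/

open MeasureTheory ProbabilityTheory Filter Real
open scoped Topology

lemma tendsto_zero_of_tendsto_rpow_mul {g : ℝ → ℝ} {α L : ℝ} (hα : 0 < α)
    (h : Tendsto (fun t => t ^ α * g t) atTop (𝓝 L)) : Tendsto g atTop (𝓝 0) := by
  have h0 := (tendsto_rpow_neg_atTop hα).mul h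
  rw [zero_mul] at h0
  refine h0.congr' ?_
  filter_upwards [eventually_gt_atTop 0] with t ht
  rw [← mul_assoc, ← rpow_add ht, neg_add_cancel, rpow_zero, one_mul]

def HasParetoTail {Ω : Type*} [MeasurableSpace Ω] (μ : Measure Ω) (X : Ω → ℝ) (α K : ℝ) :
    Prop :=
  Tendsto (fun t : ℝ => t ^ α * μ.real {ω | t < X ω}) atTop (𝓝 K)

namespace HasParetoTail

variable {Ω : Type*} [MeasurableSpace Ω] {μ : Measure Ω} {X : Ω → ℝ} {α K : ℝ}

lemma tendsto_mul_threshold (h : HasParetoTail μ X α K) {s : ℝ} (hs : 0 < s) :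
    Tendsto (fun t => t ^ α * μ.real {ω | s * t < X ω}) atTop (𝓝 (K / s ^ α)) := by
  have hscaled := (h.comp (tendsto_id.const_mul_atTop hs)).div_const (s ^ α)
  refine hscaled.congr' ?_
  filter_upwards [eventually_ge_atTop 0] with t ht
  simp only [Function.comp_apply, id, mul_rpow hs.le ht]
  field_simp

lemma const_mul (hα : 0 < α) (h : HasParetoTail μ X α K) {c : ℝ} (hc : 0 ≤ c) :
    HasParetoTail μ (fun ω => c * X ω) α (K * c ^ α) := by
  rcases hc.eq_or_lt with rfl | hc
  · rw [zero_rpow hα.ne', mul_zero]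
    refine tendsto_const_nhds.congr' ?_
    filter_upwards [eventually_ge_atTop 0] with t ht
    simp [not_lt.2 ht]
  · have hlim := h.tendsto_mul_threshold (inv_pos.2 hc)
    rw [inv_rpow hc.le, div_inv_eq_mul] at hlim
    refine hlim.congr fun t => ?_
    simp only [inv_mul_lt_iff₀ hc]

end HasParetoTail

lemma Finset.prod_one_sub_le_one_sub_sum_add_sq {ι : Type*} (s : Finset ι) {p : ι → ℝ}
    (h0 : ∀ i ∈ s, 0 ≤ p i) (h1 : ∀ i ∈ s, p i ≤ 1) :
    ∏ i ∈ s, (1 - p i) ≤ 1 - ∑ i ∈ s, p i + (∑ i ∈ s, p i) ^ 2 := by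
  classical
  induction s using Finset.induction_on with
  | empty => simp
  | @insert a s ha ih =>
    have hpa0 := h0 a (mem_insert_self a s)
    have hS : 0 ≤ ∑ i ∈ s, p i := sum_nonneg fun i hi => h0 i (mem_insert_of_mem hi)
    rw [prod_insert ha, sum_insert ha]
    calc (1 - p a) * ∏ i ∈ s, (1 - p i)
        ≤ (1 - p a) * (1 - ∑ i ∈ s, p i + (∑ i ∈ s, p i) ^ 2) := by
          gcongr
          · linarith [h1 a (mem_insert_self a s)]
          · exact ih (fun i hi => h0 i (mem_insert_of_mem hi))
              (fun i hi => h1 i (mem_insert_of_mem hi))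
      _ ≤ _ := by nlinarith [mul_nonneg hpa0 hS, mul_nonneg (mul_nonneg hpa0 hS) hS]

lemma Fintype.sum_le_add_card_mul {ι : Type*} [Fintype ι] {x : ι → ℝ} {a b : ℝ}
    (ha : 0 ≤ a) (hb : 0 ≤ b) (hxa : ∀ j, x j ≤ a)
    (hxb : ∀ j k, j ≠ k → x j ≤ b ∨ x k ≤ b) :
    ∑ j, x j ≤ a + Fintype.card ι * b := by
  classical
  by_cases hbig : ∃ j, b < x j
  · obtain ⟨j, hj⟩ := hbig
    have hrest : ∀ k ∈ Finset.univ.erase j, x k ≤ b := fun k hk =>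
      ((hxb k j (Finset.ne_of_mem_erase hk)).resolve_right hj.not_ge)
    have hcard : ((Finset.univ.erase j).card : ℝ) ≤ Fintype.card ι := by
      exact_mod_cast (Finset.card_erase_le).trans (Finset.card_univ).le
    calc ∑ k, x k = x j + ∑ k ∈ Finset.univ.erase j, x k :=
          (Finset.add_sum_erase _ _ (Finset.mem_univ j)).symm
      _ ≤ a + (Finset.univ.erase j).card * b := by
          grw [hxa j, Finset.sum_le_card_nsmul _ _ _ hrest, nsmul_eq_mul]
      _ ≤ a + Fintype.card ι * b := by gcongr
  · simp only [not_exists, not_lt] at hbig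
    calc ∑ k, x k ≤ ∑ _k : ι, b := Finset.sum_le_sum fun k _ => hbig k
      _ ≤ a + Fintype.card ι * b := by simp [ha]

namespace ProbabilityTheory

variable {Ω ι : Type*} [MeasurableSpace Ω] {μ : Measure Ω} [IsProbabilityMeasure μ]
  [Fintype ι]

lemma iIndepFun.measureReal_iUnion_preimage {β : Type*} [MeasurableSpace β] {X : ι → Ω → β}
    (hX : iIndepFun X μ) {S : ι → Set β} (hS : ∀ j, MeasurableSet (S j))
    (hXm : ∀ j, Measurable (X j)) :
    μ.real (⋃ j, X j ⁻¹' S j) = 1 - ∏ j, (1 - μ.real (X j ⁻¹' S j)) := by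
  have hinter : μ.real (⋂ j, X j ⁻¹' (S j)ᶜ) = ∏ j, μ.real (X j ⁻¹' (S j)ᶜ) := by
    simp only [measureReal_def, hX.meas_iInter fun j => ⟨(S j)ᶜ, (hS j).compl, rfl⟩,
      ENNReal.toReal_prod]
  rw [← compl_compl (⋃ j, X j ⁻¹' S j), probReal_compl_eq_one_sub
    (MeasurableSet.iUnion fun j => hXm j (hS j)).compl, Set.compl_iUnion]
  simp only [← Set.preimage_compl, hinter]
  congr 2 with j
  exact probReal_compl_eq_one_sub (hXm j (hS j))

lemma iIndepFun.sum_sub_sq_le_measureReal_lt_sum {X : ι → Ω → ℝ} (hX : iIndepFun X μ)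
    (hXm : ∀ j, Measurable (X j)) (hX0 : ∀ j ω, 0 ≤ X j ω) (t : ℝ) :
    ∑ j, μ.real {ω | t < X j ω} - (∑ j, μ.real {ω | t < X j ω}) ^ 2
      ≤ μ.real {ω | t < ∑ j, X j ω} := by
  have hsub : (⋃ j, X j ⁻¹' Set.Ioi t) ⊆ {ω | t < ∑ j, X j ω} := by
    simp only [Set.iUnion_subset_iff]
    intro j ω (hj : t < X j ω)
    exact hj.trans_le (Finset.single_le_sum (fun k _ => hX0 k ω) (Finset.mem_univ j))
  calc _ ≤ 1 - ∏ j, (1 - μ.real {ω | t < X j ω}) := by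
        have := Finset.univ.prod_one_sub_le_one_sub_sum_add_sq
          (p := fun j => μ.real {ω | t < X j ω}) (fun _ _ => measureReal_nonneg)
          (fun _ _ => measureReal_le_one)
        linarith
    _ = μ.real (⋃ j, X j ⁻¹' Set.Ioi t) :=
        (hX.measureReal_iUnion_preimage (fun _ => measurableSet_Ioi) hXm).symm
    _ ≤ _ := measureReal_mono hsub

lemma iIndepFun.measureReal_lt_sum_le [DecidableEq ι] {X : ι → Ω → ℝ} (hX : iIndepFun X μ)
    {a b t : ℝ} (ha : 0 ≤ a) (hb : 0 ≤ b)
    (hab : a + Fintype.card ι * b ≤ t) :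
    μ.real {ω | t < ∑ j, X j ω}
      ≤ ∑ j, μ.real {ω | a < X j ω}
        + ∑ jk ∈ Finset.univ.offDiag, μ.real {ω | b < X jk.1 ω} * μ.real {ω | b < X jk.2 ω} := by
  have hcover : {ω | t < ∑ j, X j ω} ⊆ (⋃ j, {ω | a < X j ω})
      ∪ ⋃ jk ∈ Finset.univ.offDiag, {ω | b < X jk.1 ω} ∩ {ω | b < X jk.2 ω} := by
    intro ω hω
    by_contra hnot
    simp only [Set.mem_union, Set.mem_iUnion, Set.mem_inter_iff, Set.mem_ofPred_eq,
      Finset.mem_offDiag, Finset.mem_univ, true_and, exists_prop, Prod.exists, not_or,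
      not_exists, not_lt, not_and] at hnot
    refine (Fintype.sum_le_add_card_mul ha hb hnot.1 fun j k hjk => ?_).trans hab |>.not_gt hω
    by_contra! hjk'
    exact (hnot.2 j k hjk hjk'.1).not_gt hjk'.2
  have hpair : ∀ jk ∈ (Finset.univ.offDiag : Finset (ι × ι)),
      μ.real ({ω | b < X jk.1 ω} ∩ {ω | b < X jk.2 ω})
        = μ.real {ω | b < X jk.1 ω} * μ.real {ω | b < X jk.2 ω} := fun jk hjk => by
    simp only [measureReal_def, ← ENNReal.toReal_mul]
    exact congrArg _ ((hX.indepFun (Finset.mem_offDiag.1 hjk).2.2).measure_inter_preimage_eq_mul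
      _ _ measurableSet_Ioi measurableSet_Ioi)
  calc _ ≤ _ := measureReal_mono hcover
    _ ≤ _ := measureReal_union_le _ _
    _ ≤ _ := add_le_add (measureReal_iUnion_fintype_le _) (measureReal_biUnion_finset_le _ _)
    _ = _ := by rw [Finset.sum_congr rfl hpair]

variable {X : ι → Ω → ℝ} {α : ℝ} {K : ι → ℝ}

lemma iIndepFun.eventually_lt_mul_measureReal_lt_sum (hX : iIndepFun X μ)
    (hXm : ∀ j, Measurable (X j)) (hX0 : ∀ j ω, 0 ≤ X j ω) (hα : 0 < α)
    (htail : ∀ j, HasParetoTail μ (X j) α (K j)) {b : ℝ} (hb : b < ∑ j, K j) :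
    ∀ᶠ t in atTop, b < t ^ α * μ.real {ω | t < ∑ j, X j ω} := by
  set S : ℝ → ℝ := fun t => ∑ j, μ.real {ω | t < X j ω}
  have hS : Tendsto (fun t => t ^ α * S t) atTop (𝓝 (∑ j, K j)) := by
    simpa only [S, Finset.mul_sum] using tendsto_finsetSum _ fun j _ => htail j
  have hS0 : Tendsto S atTop (𝓝 0) := by
    simpa using tendsto_finsetSum Finset.univ fun j _ =>
      tendsto_zero_of_tendsto_rpow_mul hα (htail j)
  have hlower := hS.sub (hS.mul hS0)
  rw [mul_zero, sub_zero] at hlower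
  filter_upwards [hlower.eventually (eventually_gt_nhds hb), eventually_ge_atTop 0] with t hbt ht
  calc b < t ^ α * S t - t ^ α * S t * S t := hbt
    _ = t ^ α * (S t - S t ^ 2) := by ring
    _ ≤ _ := by gcongr; exact hX.sum_sub_sq_le_measureReal_lt_sum hXm hX0 t

lemma iIndepFun.eventually_mul_measureReal_lt_sum_lt (hX : iIndepFun X μ) (hα : 0 < α)
    (htail : ∀ j, HasParetoTail μ (X j) α (K j)) {ε : ℝ} (hε : ε ∈ Set.Ioo 0 1) {b : ℝ}
    (hb : (∑ j, K j) / (1 - ε) ^ α < b) :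
    ∀ᶠ t in atTop, t ^ α * μ.real {ω | t < ∑ j, X j ω} < b := by
  classical
  obtain ⟨hε0, hε1⟩ := hε
  -- the `+ 1` keeps `s` positive when `ι` is empty
  set s := ε / (Fintype.card ι + 1)
  have hs : 0 < s := by positivity
  have hcard : Fintype.card ι * s ≤ ε := by
    rw [mul_div_assoc', div_le_iff₀ (by positivity)]
    nlinarith
  set u : ℝ → ℝ := fun t => ∑ j, t ^ α * μ.real {ω | (1 - ε) * t < X j ω}
    + ∑ jk ∈ Finset.univ.offDiag,
        t ^ α * μ.real {ω | s * t < X jk.1 ω} * μ.real {ω | s * t < X jk.2 ω}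
  have hu : Tendsto u atTop (𝓝 (∑ j, K j / (1 - ε) ^ α
      + ∑ jk ∈ (Finset.univ.offDiag : Finset (ι × ι)), K jk.1 / s ^ α * 0)) :=
    (tendsto_finsetSum _ fun j _ => (htail j).tendsto_mul_threshold (by linarith)).add
      (tendsto_finsetSum _ fun jk _ =>
        ((htail jk.1).tendsto_mul_threshold hs).mul
          (tendsto_zero_of_tendsto_rpow_mul hα ((htail jk.2).tendsto_mul_threshold hs)))
  rw [← Finset.sum_div, Finset.sum_congr rfl fun _ _ => mul_zero _, Finset.sum_const_zero,
    add_zero] at hu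
  filter_upwards [hu.eventually (eventually_lt_nhds hb), eventually_ge_atTop 0] with t hut ht
  calc t ^ α * μ.real {ω | t < ∑ j, X j ω}
      ≤ t ^ α * (∑ j, μ.real {ω | (1 - ε) * t < X j ω}
          + ∑ jk ∈ Finset.univ.offDiag,
              μ.real {ω | s * t < X jk.1 ω} * μ.real {ω | s * t < X jk.2 ω}) := by
        gcongr
        refine hX.measureReal_lt_sum_le (by nlinarith) (by positivity) ?_
        nlinarith
    _ = u t := by simp only [u, mul_add, Finset.mul_sum, mul_assoc]
    _ < b := hut

lemma iIndepFun.hasParetoTail_sum (hX : iIndepFun X μ) (hXm : ∀ j, Measurable (X j))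
    (hX0 : ∀ j ω, 0 ≤ X j ω) (hα : 0 < α) (htail : ∀ j, HasParetoTail μ (X j) α (K j)) :
    HasParetoTail μ (fun ω => ∑ j, X j ω) α (∑ j, K j) := by
  refine tendsto_order.2 ⟨fun b hb => hX.eventually_lt_mul_measureReal_lt_sum hXm hX0 hα htail hb,
    fun b hb => ?_⟩
  have hcont : ContinuousAt (fun ε : ℝ => (∑ j, K j) / (1 - ε) ^ α) 0 :=
    continuousAt_const.div
      ((continuousAt_const.sub continuousAt_id).rpow_const (Or.inl (by norm_num)))
      (by norm_num)
  have hεb : ∀ᶠ ε in 𝓝[>] 0, (∑ j, K j) / (1 - ε) ^ α < b :=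
    hcont.tendsto.mono_left nhdsWithin_le_nhds |>.eventually (eventually_lt_nhds (by simpa))
  have hε1 : ∀ᶠ ε : ℝ in 𝓝[>] 0, ε < 1 :=
    eventually_nhdsWithin_of_eventually_nhds (eventually_lt_nhds one_pos)
  obtain ⟨ε, hεb, hε1, hε0⟩ := (hεb.and (hε1.and self_mem_nhdsWithin)).exists
  exact hX.eventually_mul_measureReal_lt_sum_lt hα htail ⟨hε0, hε1⟩ hεb

end ProbabilityTheory

section FiniteRange

variable {Ω β : Type*} [MeasurableSpace Ω] {μ : Measure Ω} [MeasurableSpace β]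
  [MeasurableSingletonClass β] {A : Ω → β} {F : Finset β}

lemma integral_comp_eq_sum_of_mem [IsFiniteMeasure μ] (hA : Measurable A) (hF : ∀ ω, A ω ∈ F)
    (f : β → ℝ) : ∫ ω, f (A ω) ∂μ = ∑ a ∈ F, μ.real (A ⁻¹' {a}) * f a := by
  have hfiber : ∀ a, MeasurableSet (A ⁻¹' {a}) := fun a => hA (measurableSet_singleton a)
  have hrepr : (fun ω => f (A ω)) = fun ω => ∑ a ∈ F, (A ⁻¹' {a}).indicator (fun _ => f a) ω := by
    ext ω
    rw [Finset.sum_eq_single_of_mem (A ω) (hF ω), Set.indicator_of_mem (s := A ⁻¹' {A ω}) rfl]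
    intro a _ hne
    exact Set.indicator_of_notMem (fun h : A ω = a => hne h.symm) _
  rw [hrepr, integral_finsetSum _ fun a _ => (integrable_const _).indicator (hfiber a)]
  exact Finset.sum_congr rfl fun a _ => by rw [integral_indicator_const _ (hfiber a), smul_eq_mul]

lemma ProbabilityTheory.IndepFun.measureReal_setOf_mem_eq_sum [IsFiniteMeasure μ]
    {γ : Type*} [MeasurableSpace γ] {W : Ω → γ} (hAW : IndepFun A W μ) (hA : Measurable A)
    (hW : Measurable W) (hF : ∀ ω, A ω ∈ F) {S : β → Set γ} (hS : ∀ a, MeasurableSet (S a)) :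
    μ.real {ω | W ω ∈ S (A ω)} = ∑ a ∈ F, μ.real (A ⁻¹' {a}) * μ.real (W ⁻¹' S a) := by
  have hsplit : {ω | W ω ∈ S (A ω)} = ⋃ a ∈ F, A ⁻¹' {a} ∩ W ⁻¹' S a := by
    ext ω
    simp only [Set.mem_ofPred_eq, Set.mem_iUnion, Set.mem_inter_iff, Set.mem_preimage,
      Set.mem_singleton_iff, exists_prop]
    exact ⟨fun h => ⟨A ω, hF ω, rfl, h⟩, by rintro ⟨a, -, rfl, h⟩; exact h⟩
  rw [hsplit, measureReal_biUnion_finset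
    (fun a _ b _ hab => (Set.disjoint_singleton.2 hab).preimage A |>.mono
      Set.inter_subset_left Set.inter_subset_left)
    fun a _ => (hA (measurableSet_singleton a)).inter (hW (hS a))]
  refine Finset.sum_congr rfl fun a _ => ?_
  simp only [measureReal_def, ← ENNReal.toReal_mul]
  rw [hAW.measure_inter_preimage_eq_mul _ _ (measurableSet_singleton a) (hS a)]

end FiniteRange

theorem stmt_5_general {Ω : Type*} [MeasurableSpace Ω] (μ : Measure Ω) [IsProbabilityMeasure μ]
    (q d : ℕ) (A : Ω → Fin q → Fin d → ℝ)
    (hAmeas : Measurable A) (hAfin : (Set.range A).Finite)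
    (hA01 : ∀ ω i j, A ω i j ∈ Set.Icc (0 : ℝ) 1)
    (V : Fin d → Ω → ℝ) (hVmeas : ∀ j, Measurable (V j)) (hVnonneg : ∀ j ω, 0 ≤ V j ω)
    (hVindep : iIndepFun V μ)
    (hAV : IndepFun A (fun ω j => V j ω) μ)
    (K : Fin d → ℝ) (α : ℝ) (hα : 0 < α)
    (htail : ∀ j, Tendsto (fun t : ℝ => t ^ α * (μ {ω | t < V j ω}).toReal) atTop
      (nhds (K j)))
    (i : Fin q) :
    Tendsto (fun t : ℝ => t ^ α * (μ {ω | t < ∑ j, A ω i j * V j ω}).toReal) atTop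
      (nhds (∑ j, K j * ∫ ω, (A ω i j) ^ α ∂μ)) := by
  set F := hAfin.toFinset
  have hF : ∀ ω, A ω ∈ F := fun ω => hAfin.mem_toFinset.2 ⟨ω, rfl⟩
  have hrow : ∀ a ∈ F,
      HasParetoTail μ (fun ω => ∑ j, a i j * V j ω) α (∑ j, K j * a i j ^ α) := by
    intro a ha
    obtain ⟨ω, rfl⟩ := hAfin.mem_toFinset.1 ha
    exact (hVindep.comp _ fun j => measurable_const_mul _).hasParetoTail_sum
      (fun j => (hVmeas j).const_mul _) (fun j ω' => mul_nonneg (hA01 ω i j).1 (hVnonneg j ω'))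
      hα fun j => HasParetoTail.const_mul hα (htail j) (hA01 ω i j).1
  have hmix : ∀ t : ℝ, μ.real {ω | t < ∑ j, A ω i j * V j ω}
      = ∑ a ∈ F, μ.real (A ⁻¹' {a}) * μ.real {ω | t < ∑ j, a i j * V j ω} := fun t =>
    hAV.measureReal_setOf_mem_eq_sum (S := fun a => {v | t < ∑ j, a i j * v j}) hAmeas
      (measurable_pi_lambda _ hVmeas) hF fun a => measurableSet_lt measurable_const (by fun_prop)
  have hlimit : ∑ j, K j * ∫ ω, A ω i j ^ α ∂μ
      = ∑ a ∈ F, μ.real (A ⁻¹' {a}) * ∑ j, K j * a i j ^ α := by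
    simp only [Finset.mul_sum]
    rw [Finset.sum_comm]
    refine Finset.sum_congr rfl fun j _ => ?_
    rw [integral_comp_eq_sum_of_mem hAmeas hF fun a => a i j ^ α, Finset.mul_sum]
    exact Finset.sum_congr rfl fun a _ => by ring
  rw [hlimit]
  refine (tendsto_finsetSum F fun a ha =>
    Tendsto.const_mul (μ.real (A ⁻¹' {a})) (hrow a ha)).congr fun t => ?_
  rw [← measureReal_def, hmix, Finset.mul_sum]
  exact Finset.sum_congr rfl fun a _ => by ring

/-- For a random `q × d` matrix `A` with entries in `[0,1]`, taking finitely
many values, independent of independent Pareto claims `V₁,…,V_d`, the exposure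
`(AV)_i = Σ_j A_{ij} V_j` of agent `i` satisfies
`P((AV)_i > t) ~ (Σ_j K_j E[A_{ij}^α]) t^{-α}`, provided the constant is positive. -/
theorem stmt_5 {Ω : Type*} [MeasurableSpace Ω] (μ : Measure Ω) [IsProbabilityMeasure μ]
    (q d : ℕ) (A : Ω → Fin q → Fin d → ℝ)
    (hAmeas : Measurable A) (hAfin : (Set.range A).Finite)
    (hA01 : ∀ ω i j, A ω i j ∈ Set.Icc (0 : ℝ) 1)
    (V : Fin d → Ω → ℝ) (hVmeas : ∀ j, Measurable (V j)) (hVnonneg : ∀ j ω, 0 ≤ V j ω)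
    (hVindep : iIndepFun V μ)
    (hAV : IndepFun A (fun ω j => V j ω) μ)
    (K : Fin d → ℝ) (α : ℝ) (hK : ∀ j, 0 < K j) (hα : 0 < α)
    (htail : ∀ j, Tendsto (fun t : ℝ => t ^ α * (μ {ω | t < V j ω}).toReal) atTop
      (nhds (K j)))
    (i : Fin q)
    (hpos : 0 < ∑ j, K j * ∫ ω, (A ω i j) ^ α ∂μ) :
    Tendsto (fun t : ℝ => t ^ α * (μ {ω | t < ∑ j, A ω i j * V j ω}).toReal) atTop
      (nhds (∑ j, K j * ∫ ω, (A ω i j) ^ α ∂μ)) :=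
  stmt_5_general μ q d A hAmeas hAfin hA01 V hVmeas hVnonneg hVindep hAV K α hα htail i
end

section
/- With A_{ij} = 𝟙(i~j) W_{ij}, total weights satisfying Σ_{i=1}^q W_{ij} 𝟙(i~j) ∈ [0,1], and independent Pareto claims V_j of index α with constants K_j, independent of the random graph: P(Σ_{j=1}^d (1 − Σ_{i=1}^q W_{ij} 𝟙(i~j)) V_j > t) ~ t^{-α} Σ_{j=1}^d K_j E[(1 − Σ_i W_{ij} 𝟙(i~j))^α], provided the limit constant is positive. -/
open MeasureTheory ProbabilityTheory Filter Real

section Aux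
set_option linter.unusedSectionVars false

variable {Ω : Type*} [MeasurableSpace Ω] {μ : Measure Ω} [IsProbabilityMeasure μ] {α : ℝ}

/-- scaling lemma -/
lemma tail_smul (hα : 0 < α) {X : Ω → ℝ} {Kx : ℝ}
    (hX : Tendsto (fun t : ℝ => t ^ α * (μ {ω | t < X ω}).toReal) atTop (nhds Kx))
    {c : ℝ} (hc : 0 ≤ c) :
    Tendsto (fun t : ℝ => t ^ α * (μ {ω | t < c * X ω}).toReal) atTop
      (nhds (c ^ α * Kx)) := by
  rcases eq_or_lt_of_le hc with h0 | h0
  · have h1 : ∀ᶠ t : ℝ in atTop, t ^ α * (μ {ω | t < c * X ω}).toReal = 0 := by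
      filter_upwards [eventually_gt_atTop 0] with t ht
      have : {ω | t < c * X ω} = (∅ : Set Ω) := by
        ext ω; simp [← h0, not_lt.2 ht.le]
      simp [this]
    rw [show c ^ α * Kx = 0 by simp [← h0, Real.zero_rpow hα.ne']]
    exact Tendsto.congr' (h1.mono fun t h => h.symm) tendsto_const_nhds
  · have hcomp : Tendsto (fun t : ℝ => (t / c) ^ α * (μ {ω | t / c < X ω}).toReal)
        atTop (nhds Kx) := hX.comp (tendsto_id.atTop_div_const h0)
    have h2 := hcomp.const_mul (c ^ α)
    refine Tendsto.congr' ?_ h2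
    filter_upwards [eventually_ge_atTop 0] with t ht
    have hev : {ω | t / c < X ω} = {ω | t < c * X ω} := by
      ext ω; simp [div_lt_iff₀ h0, mul_comm]
    rw [hev, Real.div_rpow ht hc]
    have hcne : (c : ℝ) ^ α ≠ 0 := (Real.rpow_pos_of_pos h0 α).ne'
    field_simp

lemma tail_scale (hα : 0 < α) {X : Ω → ℝ} {Kx : ℝ}
    (hX : Tendsto (fun t : ℝ => t ^ α * (μ {ω | t < X ω}).toReal) atTop (nhds Kx))
    {c : ℝ} (hc : 0 < c) :
    Tendsto (fun t : ℝ => t ^ α * (μ {ω | c * t < X ω}).toReal) atTop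
      (nhds (c⁻¹ ^ α * Kx)) := by
  have h := tail_smul hα hX (inv_nonneg.2 hc.le)
  refine h.congr fun t => ?_
  have : {ω | t < c⁻¹ * X ω} = {ω | c * t < X ω} := by
    ext ω
    simp only [Set.mem_setOf_eq, inv_mul_eq_div, lt_div_iff₀ hc]
    rw [mul_comm]
  rw [this]

lemma ptail_zero (hα : 0 < α) {X : Ω → ℝ} {Kx : ℝ}
    (hX : Tendsto (fun t : ℝ => t ^ α * (μ {ω | t < X ω}).toReal) atTop (nhds Kx)) :
    Tendsto (fun t : ℝ => (μ {ω | t < X ω}).toReal) atTop (nhds 0) := by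
  have h := hX.div_atTop (tendsto_rpow_atTop hα)
  refine Tendsto.congr' ?_ h
  filter_upwards [eventually_gt_atTop 0] with t ht
  have hne : t ^ α ≠ 0 := (Real.rpow_pos_of_pos ht α).ne'
  field_simp

lemma indep_inter_toReal {X Y : Ω → ℝ} (hind : IndepFun X Y μ) (s t : ℝ) :
    (μ ({ω | s < X ω} ∩ {ω | t < Y ω})).toReal
      = (μ {ω | s < X ω}).toReal * (μ {ω | t < Y ω}).toReal := by
  have : μ (X ⁻¹' Set.Ioi s ∩ Y ⁻¹' Set.Ioi t)
      = μ (X ⁻¹' Set.Ioi s) * μ (Y ⁻¹' Set.Ioi t) :=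
    hind.measure_inter_preimage_eq_mul _ _ measurableSet_Ioi measurableSet_Ioi
  have h2 : (X ⁻¹' Set.Ioi s) = {ω | s < X ω} := rfl
  have h3 : (Y ⁻¹' Set.Ioi t) = {ω | t < Y ω} := rfl
  rw [h2, h3] at this
  rw [this, ENNReal.toReal_mul]

lemma tail_add (hα : 0 < α) {X Y : Ω → ℝ} (hXm : Measurable X) (hYm : Measurable Y)
    (hXn : ∀ ω, 0 ≤ X ω) (hYn : ∀ ω, 0 ≤ Y ω) (hind : IndepFun X Y μ) {Kx Ky : ℝ}
    (hX : Tendsto (fun t : ℝ => t ^ α * (μ {ω | t < X ω}).toReal) atTop (nhds Kx))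
    (hY : Tendsto (fun t : ℝ => t ^ α * (μ {ω | t < Y ω}).toReal) atTop (nhds Ky)) :
    Tendsto (fun t : ℝ => t ^ α * (μ {ω | t < X ω + Y ω}).toReal) atTop
      (nhds (Kx + Ky)) := by
  set fS : ℝ → ℝ := fun t => t ^ α * (μ {ω | t < X ω + Y ω}).toReal with hfS
  -- lower bound function
  set H : ℝ → ℝ := fun t => t ^ α * (μ {ω | t < X ω}).toReal
      + t ^ α * (μ {ω | t < Y ω}).toReal
      - (t ^ α * (μ {ω | t < X ω}).toReal) * (μ {ω | t < Y ω}).toReal with hH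
  have hHlim : Tendsto H atTop (nhds (Kx + Ky)) := by
    have := (hX.add hY).sub (hX.mul (ptail_zero hα hY))
    simpa using this
  have hLB : ∀ᶠ t in atTop, H t ≤ fS t := by
    filter_upwards [eventually_ge_atTop 0] with t ht
    have hsub : {ω | t < X ω} ∪ {ω | t < Y ω} ⊆ {ω | t < X ω + Y ω} := by
      rintro ω (h | h) <;> simp only [Set.mem_setOf_eq] at h ⊢
      · linarith [hYn ω]
      · linarith [hXn ω]
    have h1 : (μ ({ω | t < X ω} ∪ {ω | t < Y ω})).toReal
        ≤ (μ {ω | t < X ω + Y ω}).toReal :=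
      ENNReal.toReal_mono (measure_ne_top μ _) (measure_mono hsub)
    have h2 : μ ({ω | t < X ω} ∪ {ω | t < Y ω}) + μ ({ω | t < X ω} ∩ {ω | t < Y ω})
        = μ {ω | t < X ω} + μ {ω | t < Y ω} :=
      measure_union_add_inter _ (hYm measurableSet_Ioi)
    have h3 := congrArg ENNReal.toReal h2
    rw [ENNReal.toReal_add (measure_ne_top μ _) (measure_ne_top μ _),
      ENNReal.toReal_add (measure_ne_top μ _) (measure_ne_top μ _),
      indep_inter_toReal hind t t] at h3
    have htα : 0 ≤ t ^ α := Real.rpow_nonneg ht α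
    have key : (μ {ω | t < X ω}).toReal + (μ {ω | t < Y ω}).toReal
        - (μ {ω | t < X ω}).toReal * (μ {ω | t < Y ω}).toReal
        ≤ (μ {ω | t < X ω + Y ω}).toReal := by linarith
    have := mul_le_mul_of_nonneg_left key htα
    simp only [hH, hfS]
    ring_nf
    ring_nf at this
    linarith
  -- upper bound family
  set G : ℝ → ℝ → ℝ := fun ε t => t ^ α * (μ {ω | (1 - ε) * t < X ω}).toReal
      + t ^ α * (μ {ω | (1 - ε) * t < Y ω}).toReal
      + (t ^ α * (μ {ω | ε * t < X ω}).toReal) * (μ {ω | ε * t < Y ω}).toReal with hG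
  have hGlim : ∀ ε : ℝ, ε ∈ Set.Ioo (0 : ℝ) 1 →
      Tendsto (G ε) atTop (nhds ((1 - ε)⁻¹ ^ α * Kx + (1 - ε)⁻¹ ^ α * Ky)) := by
    rintro ε ⟨hε0, hε1⟩
    have h1ε : (0 : ℝ) < 1 - ε := by linarith
    have t1 := tail_scale hα hX h1ε
    have t2 := tail_scale hα hY h1ε
    have t3 := tail_scale hα hX hε0
    have t4 : Tendsto (fun t : ℝ => (μ {ω | ε * t < Y ω}).toReal) atTop (nhds 0) :=
      (ptail_zero hα hY).comp (tendsto_id.const_mul_atTop hε0)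
    have := (t1.add t2).add (t3.mul t4)
    simpa using this
  have hUB : ∀ ε : ℝ, ε ∈ Set.Ioo (0 : ℝ) 1 → ∀ᶠ t in atTop, fS t ≤ G ε t := by
    rintro ε ⟨hε0, hε1⟩
    filter_upwards [eventually_ge_atTop 0] with t ht
    have hsub : {ω | t < X ω + Y ω} ⊆ ({ω | (1 - ε) * t < X ω}
        ∪ {ω | (1 - ε) * t < Y ω}) ∪ ({ω | ε * t < X ω} ∩ {ω | ε * t < Y ω}) := by
      intro ω hω
      simp only [Set.mem_setOf_eq, Set.mem_union, Set.mem_inter_iff] at hω ⊢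
      by_contra hcon
      push_neg at hcon
      obtain ⟨⟨hx1, hy1⟩, hxy⟩ := hcon
      rcases le_or_gt (X ω) (ε * t) with hx2 | hx2
      · nlinarith
      · have hy2 := hxy hx2
        nlinarith
    have h1 : μ {ω | t < X ω + Y ω} ≤ μ {ω | (1 - ε) * t < X ω}
        + μ {ω | (1 - ε) * t < Y ω} + μ ({ω | ε * t < X ω} ∩ {ω | ε * t < Y ω}) := by
      refine (measure_mono hsub).trans ?_
      refine (measure_union_le _ _).trans ?_
      exact add_le_add (measure_union_le _ _) le_rfl
    have h1' : (μ {ω | t < X ω + Y ω}).toReal ≤ (μ {ω | (1 - ε) * t < X ω}).toReal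
        + (μ {ω | (1 - ε) * t < Y ω}).toReal
        + (μ {ω | ε * t < X ω}).toReal * (μ {ω | ε * t < Y ω}).toReal := by
      rw [← indep_inter_toReal hind, ← ENNReal.toReal_add (measure_ne_top μ _)
        (measure_ne_top μ _), ← ENNReal.toReal_add (by
          exact ENNReal.add_ne_top.2 ⟨measure_ne_top μ _, measure_ne_top μ _⟩)
        (measure_ne_top μ _)]
      exact ENNReal.toReal_mono (by
        exact ENNReal.add_ne_top.2 ⟨ENNReal.add_ne_top.2
          ⟨measure_ne_top μ _, measure_ne_top μ _⟩, measure_ne_top μ _⟩) h1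
    have htα : 0 ≤ t ^ α := Real.rpow_nonneg ht α
    have := mul_le_mul_of_nonneg_left h1' htα
    simp only [hG, hfS]
    ring_nf
    ring_nf at this
    linarith
  -- nonnegativity and boundedness
  have hfS0 : ∀ᶠ t in atTop, (0 : ℝ) ≤ fS t := by
    filter_upwards [eventually_ge_atTop 0] with t ht
    exact mul_nonneg (Real.rpow_nonneg ht α) ENNReal.toReal_nonneg
  have hbdd_below : atTop.IsBoundedUnder (· ≥ ·) fS :=
    isBoundedUnder_of_eventually_ge hfS0
  have hhalf : (1 / 2 : ℝ) ∈ Set.Ioo (0 : ℝ) 1 := by norm_num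
  have hbdd_above : atTop.IsBoundedUnder (· ≤ ·) fS :=
    ((hGlim _ hhalf).isBoundedUnder_le).mono_le (hUB _ hhalf)
  -- limsup bound
  have hsup : limsup fS atTop ≤ Kx + Ky := by
    have hL : Tendsto (fun ε : ℝ => (1 - ε)⁻¹ ^ α * Kx + (1 - ε)⁻¹ ^ α * Ky)
        (nhdsWithin 0 (Set.Ioi 0)) (nhds (Kx + Ky)) := by
      have hc : ContinuousAt (fun ε : ℝ => (1 - ε)⁻¹ ^ α * Kx + (1 - ε)⁻¹ ^ α * Ky) 0 := by
        have hb : ContinuousAt (fun ε : ℝ => (1 - ε)⁻¹ ^ α) 0 := by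
          refine ContinuousAt.rpow_const ?_ (Or.inr hα.le)
          exact ((continuousAt_const.sub continuousAt_id).inv₀ (by norm_num))
        exact (hb.mul continuousAt_const).add (hb.mul continuousAt_const)
      have := hc.continuousWithinAt (s := Set.Ioi (0:ℝ))
      simpa using this.tendsto
    refine ge_of_tendsto hL ?_
    filter_upwards [Ioo_mem_nhdsGT (by norm_num : (0:ℝ) < 1)] with ε hε
    calc limsup fS atTop ≤ limsup (G ε) atTop :=
          limsup_le_limsup (hUB ε hε) (hbdd_below.isCoboundedUnder_le)
            ((hGlim ε hε).isBoundedUnder_le)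
      _ = (1 - ε)⁻¹ ^ α * Kx + (1 - ε)⁻¹ ^ α * Ky := (hGlim ε hε).limsup_eq
  -- liminf bound
  have hinf : Kx + Ky ≤ liminf fS atTop := by
    calc Kx + Ky = liminf H atTop := (hHlim.liminf_eq).symm
      _ ≤ liminf fS atTop :=
          liminf_le_liminf hLB (hHlim.isBoundedUnder_ge) (hbdd_above.isCoboundedUnder_ge)
  exact tendsto_of_le_liminf_of_limsup_le hinf hsup hbdd_above hbdd_below

lemma tail_zero (hα : 0 < α) :
    Tendsto (fun t : ℝ => t ^ α * (μ {ω : Ω | t < 0}).toReal) atTop (nhds 0) := by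
  have h1 : ∀ᶠ t : ℝ in atTop, t ^ α * (μ {ω : Ω | t < 0}).toReal = 0 := by
    filter_upwards [eventually_gt_atTop 0] with t ht
    have : {ω : Ω | t < (0:ℝ)} = (∅ : Set Ω) := by
      ext ω; simp [not_lt.2 ht.le]
    simp [this]
  exact Tendsto.congr' (h1.mono fun t h => h.symm) tendsto_const_nhds

lemma tail_sum (hα : 0 < α) {d : ℕ} {V : Fin d → Ω → ℝ}
    (hVm : ∀ j, Measurable (V j)) (hVn : ∀ j ω, 0 ≤ V j ω)
    (hind : iIndepFun V μ) {K : Fin d → ℝ}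
    (htail : ∀ j, Tendsto (fun t : ℝ => t ^ α * (μ {ω | t < V j ω}).toReal) atTop
      (nhds (K j)))
    (c : Fin d → ℝ) (hc : ∀ j, 0 ≤ c j) (s : Finset (Fin d)) :
    Tendsto (fun t : ℝ => t ^ α * (μ {ω | t < ∑ j ∈ s, c j * V j ω}).toReal) atTop
      (nhds (∑ j ∈ s, c j ^ α * K j)) := by
  classical
  induction s using Finset.cons_induction with
  | empty =>
    simpa using tail_zero (μ := μ) hα
  | cons j s hj ih =>
    set f : Fin d → Ω → ℝ := fun i ω => c i * V i ω with hf
    have hfm : ∀ i, Measurable (f i) := fun i => (hVm i).const_mul _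
    have hfind : iIndepFun f μ := by
      have := hind.comp (g := fun i (x : ℝ) => c i * x)
        (fun i => measurable_const_mul _)
      exact this
    have hXY : IndepFun (f j) (∑ i ∈ s, f i) μ :=
      (iIndepFun.indepFun_finsetSum_of_notMem hfind hfm hj).symm
    have hYm : Measurable (fun ω => ∑ i ∈ s, c i * V i ω) := by
      exact Finset.measurable_sum s (fun i _ => hfm i)
    have hXn : ∀ ω, 0 ≤ f j ω := fun ω => mul_nonneg (hc j) (hVn j ω)
    have hYn : ∀ ω, 0 ≤ ∑ i ∈ s, c i * V i ω :=
      fun ω => Finset.sum_nonneg fun i _ => mul_nonneg (hc i) (hVn i ω)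
    have hXY' : IndepFun (f j) (fun ω => ∑ i ∈ s, c i * V i ω) μ := by
      have : (∑ i ∈ s, f i) = fun ω => ∑ i ∈ s, c i * V i ω := by
        funext ω; simp [hf, Finset.sum_apply]
      rwa [this] at hXY
    have hXt := tail_smul hα (htail j) (hc j)
    have := tail_add hα (hfm j) hYm hXn hYn hXY' hXt ih
    rw [Finset.sum_cons]
    rw [mul_comm ((c j) ^ α) (K j)] at this
    rw [mul_comm ((c j) ^ α) (K j)]
    refine this.congr fun t => ?_
    have hset : {ω | t < f j ω + ∑ i ∈ s, c i * V i ω}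
        = {ω | t < c j * V j ω + ∑ i ∈ s, c i * V i ω} := rfl
    rw [hset]
    have hset2 : {ω | t < c j * V j ω + ∑ i ∈ s, c i * V i ω}
        = {ω | t < ∑ i ∈ Finset.cons j s hj, c i * V i ω} := by
      ext ω; simp only [Set.mem_setOf_eq, Finset.sum_cons]
    rw [hset2]

end Aux

/-- Tail of the uninsured losses. With random insured proportions
`B_{ij} = W_{ij} 𝟙(i~j)` whose column sums `Σ_i B_{ij}` lie in `[0,1]`, taking finitely
many values and independent of the independent Pareto claims `V_j`:
`P(Σ_j (1 − Σ_i B_{ij}) V_j > t) ~ t^{-α} Σ_j K_j E[(1 − Σ_i B_{ij})^α]`,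
provided the limit constant is positive. -/
theorem stmt_13 {Ω : Type*} [MeasurableSpace Ω] (μ : Measure Ω) [IsProbabilityMeasure μ]
    (q d : ℕ) (B : Ω → Fin q → Fin d → ℝ)
    (hBmeas : Measurable B) (hBfin : (Set.range B).Finite)
    (hBnonneg : ∀ ω i j, 0 ≤ B ω i j)
    (hBsum : ∀ ω j, (∑ i, B ω i j) ∈ Set.Icc (0 : ℝ) 1)
    (V : Fin d → Ω → ℝ) (hVmeas : ∀ j, Measurable (V j)) (hVnonneg : ∀ j ω, 0 ≤ V j ω)
    (hVindep : iIndepFun V μ)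
    (hBV : IndepFun B (fun ω j => V j ω) μ)
    (K : Fin d → ℝ) (α : ℝ) (hK : ∀ j, 0 < K j) (hα : 0 < α)
    (htail : ∀ j, Tendsto (fun t : ℝ => t ^ α * (μ {ω | t < V j ω}).toReal) atTop
      (nhds (K j)))
    (hpos : 0 < ∑ j, K j * ∫ ω, (1 - ∑ i, B ω i j) ^ α ∂μ) :
    Tendsto (fun t : ℝ =>
        t ^ α * (μ {ω | t < ∑ j, (1 - ∑ i, B ω i j) * V j ω}).toReal) atTop
      (nhds (∑ j, K j * ∫ ω, (1 - ∑ i, B ω i j) ^ α ∂μ)) := by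
  classical
  set c : (Fin q → Fin d → ℝ) → Fin d → ℝ := fun b j => 1 - ∑ i, b i j with hcdef
  set S : Finset (Fin q → Fin d → ℝ) := hBfin.toFinset with hSdef
  have hmemS : ∀ ω, B ω ∈ S := fun ω => hBfin.mem_toFinset.2 ⟨ω, rfl⟩
  have hcS : ∀ b ∈ S, ∀ j, 0 ≤ c b j := by
    intro b hb j
    obtain ⟨ω, rfl⟩ := hBfin.mem_toFinset.1 hb
    have := (hBsum ω j).2
    simp only [hcdef]
    linarith
  -- measurable singleton preimages
  have hBb : ∀ b, MeasurableSet (B ⁻¹' {b}) :=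
    fun b => hBmeas (measurableSet_singleton b)
  -- decomposition of the measure
  have hdecomp : ∀ t : ℝ, (μ {ω | t < ∑ j, c (B ω) j * V j ω}).toReal
      = ∑ b ∈ S, (μ (B ⁻¹' {b})).toReal * (μ {ω | t < ∑ j, c b j * V j ω}).toReal := by
    intro t
    have hunion : {ω | t < ∑ j, c (B ω) j * V j ω}
        = ⋃ b ∈ S, (B ⁻¹' {b} ∩ {ω | t < ∑ j, c b j * V j ω}) := by
      ext ω
      simp only [Set.mem_setOf_eq, Set.mem_iUnion, Set.mem_inter_iff, Set.mem_preimage,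
        Set.mem_singleton_iff]
      constructor
      · intro h; exact ⟨B ω, hmemS ω, rfl, h⟩
      · rintro ⟨b, _, rfl, h⟩; exact h
    have hWv : ∀ b, MeasurableSet {v : Fin d → ℝ | t < ∑ j, c b j * v j} := by
      intro b
      exact measurableSet_lt measurable_const
        (Finset.measurable_sum _ fun j _ => (measurable_pi_apply j).const_mul _)
    have hmeas' : ∀ b ∈ S, MeasurableSet (B ⁻¹' {b} ∩ {ω | t < ∑ j, c b j * V j ω}) := by
      intro b _
      refine (hBb b).inter ?_
      have : {ω | t < ∑ j, c b j * V j ω}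
          = (fun ω (j : Fin d) => V j ω) ⁻¹' {v : Fin d → ℝ | t < ∑ j, c b j * v j} := rfl
      rw [this]
      exact (measurable_pi_lambda _ fun j => hVmeas j) (hWv b)
    have hdisj : (S : Set (Fin q → Fin d → ℝ)).PairwiseDisjoint
        (fun b => B ⁻¹' {b} ∩ {ω | t < ∑ j, c b j * V j ω}) := by
      intro b1 _ b2 _ hne
      refine Set.disjoint_left.2 ?_
      rintro ω ⟨h1, _⟩ ⟨h2, _⟩
      exact hne (h1.symm.trans h2)
    rw [hunion, measure_biUnion_finset hdisj hmeas']
    rw [ENNReal.toReal_sum (fun b _ => measure_ne_top μ _)]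
    refine Finset.sum_congr rfl fun b _ => ?_
    have hprod : μ (B ⁻¹' {b} ∩ (fun ω (j : Fin d) => V j ω) ⁻¹'
        {v : Fin d → ℝ | t < ∑ j, c b j * v j})
        = μ (B ⁻¹' {b}) * μ ((fun ω (j : Fin d) => V j ω) ⁻¹'
          {v : Fin d → ℝ | t < ∑ j, c b j * v j}) :=
      hBV.measure_inter_preimage_eq_mul _ _ (measurableSet_singleton b) (hWv b)
    have heq : (fun ω (j : Fin d) => V j ω) ⁻¹' {v : Fin d → ℝ | t < ∑ j, c b j * v j}
        = {ω | t < ∑ j, c b j * V j ω} := rfl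
    rw [heq] at hprod
    rw [hprod, ENNReal.toReal_mul]
  -- limit for each fixed b
  have hblim : ∀ b ∈ S, Tendsto
      (fun t : ℝ => t ^ α * (μ {ω | t < ∑ j, c b j * V j ω}).toReal) atTop
      (nhds (∑ j, c b j ^ α * K j)) :=
    fun b hb => tail_sum hα hVmeas hVnonneg hVindep htail (c b) (hcS b hb) Finset.univ
  -- integral identity
  have hint : ∀ j, (∫ ω, (1 - ∑ i, B ω i j) ^ α ∂μ)
      = ∑ b ∈ S, (μ (B ⁻¹' {b})).toReal * c b j ^ α := by
    intro j
    have hfun : (fun ω => (1 - ∑ i, B ω i j) ^ α)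
        = fun ω => ∑ b ∈ S, (B ⁻¹' {b}).indicator (fun _ => c b j ^ α) ω := by
      funext ω
      have : ∀ b ∈ S, (B ⁻¹' {b}).indicator (fun _ => c b j ^ α) ω
          = if B ω = b then c b j ^ α else 0 := by
        intro b _
        by_cases h : B ω = b <;> simp [Set.indicator, h]
      rw [Finset.sum_congr rfl this, Finset.sum_ite_eq S (B ω) (fun b => c b j ^ α)]
      simp [hmemS ω, hcdef]
    rw [hfun, integral_finset_sum]
    · refine Finset.sum_congr rfl fun b _ => ?_
      rw [integral_indicator_const _ (hBb b)]
      simp [smul_eq_mul, measureReal_def]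
    · intro b _
      exact (integrable_const _).indicator (hBb b)
  -- rewrite the limit constant
  have hconst : (∑ j, K j * ∫ ω, (1 - ∑ i, B ω i j) ^ α ∂μ)
      = ∑ b ∈ S, (μ (B ⁻¹' {b})).toReal * ∑ j, c b j ^ α * K j := by
    simp_rw [hint, Finset.mul_sum]
    rw [Finset.sum_comm]
    refine Finset.sum_congr rfl fun b _ => ?_
    refine Finset.sum_congr rfl fun j _ => ?_
    ring
  rw [hconst]
  have hev : (fun t : ℝ => t ^ α * (μ {ω | t < ∑ j, (1 - ∑ i, B ω i j) * V j ω}).toReal)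
      = fun t : ℝ => ∑ b ∈ S, (μ (B ⁻¹' {b})).toReal
          * (t ^ α * (μ {ω | t < ∑ j, c b j * V j ω}).toReal) := by
    funext t
    have : {ω | t < ∑ j, (1 - ∑ i, B ω i j) * V j ω}
        = {ω | t < ∑ j, c (B ω) j * V j ω} := rfl
    rw [this, hdecomp t, Finset.mul_sum]
    refine Finset.sum_congr rfl fun b _ => ?_
    ring
  rw [hev]
  exact tendsto_finset_sum _ fun b hb => (hblim b hb).const_mul _
end

section
/- For the toy 3×3 model with edge probability matrix P having rows (1, b, b²), (b², 1, b), (b, b², 1) and A_{ij} = 𝟙(i~j)/deg(j), the individual constant for agent 1 with K_j = 1 equals C¹_ind(b) = 1 + b(2^{1−α} − 1) + b²(2^{1−α} − 1) + b³(3^{1−α} + 1 − 2^{2−α}); moreover this function of b ∈ [0,1] is monotone decreasing on [0,1] if α > 1 and monotone increasing if α < 1. -/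
/-!
Column `j` of the adjacency matrix is an independent Bernoulli vector, so
`E[A_{1j}^α] = p₁ⱼ · E[(1 + Y + Z)^{-α}]` with `Y, Z` the other two entries of the column,
a polynomial in `b` and `2^{-α}, 3^{-α}`. Summing the three columns and writing
`u = 2^{1-α}`, `v = 3^{1-α}` gives `C(b) = 1 + (u - 1)(b + b² - b³) + (v - u) b³`.
Both `b + b² - b³` and `b³` increase on `[0,1]`, while `u - 1` and `v - u` are `≤ 0` for
`α > 1` and `≥ 0` for `α < 1`.
-/

open MeasureTheory ProbabilityTheory Real

theorem Fintype.sum_fin_succ_pi {β M : Type*} [Fintype β] [AddCommMonoid M] {n : ℕ}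
    (f : (Fin (n + 1) → β) → M) :
    ∑ x, f x = ∑ a, ∑ x : Fin n → β, f (Fin.cons a x) := by
  rw [← (Fin.consEquiv fun _ => β).sum_comp, Fintype.sum_prod_type]
  rfl

theorem Fintype.sum_fin_three_pi {β M : Type*} [Fintype β] [AddCommMonoid M]
    (f : (Fin 3 → β) → M) :
    ∑ x, f x = ∑ a, ∑ b, ∑ c, f ![a, b, c] := by
  simp only [Fintype.sum_fin_succ_pi, Fintype.sum_unique]
  rfl

section Independence

variable {Ω : Type*} [MeasurableSpace Ω] {μ : Measure Ω} [IsProbabilityMeasure μ]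

theorem integral_comp_eq_sum_prod_of_iIndepFun {ι β : Type*} [Fintype ι] [DecidableEq ι]
    [Fintype β] [MeasurableSpace β] [MeasurableSingletonClass β] {X : ι → Ω → β}
    (hX : ∀ i, Measurable (X i)) (hind : iIndepFun X μ) (g : (ι → β) → ℝ) :
    ∫ ω, g (fun i => X i ω) ∂μ = ∑ x, (∏ i, μ.real (X i ⁻¹' {x i})) * g x := by
  have hXae : ∀ i, AEMeasurable (X i) μ := fun i => (hX i).aemeasurable
  have : ∀ i, IsProbabilityMeasure (μ.map (X i)) :=
    fun i => Measure.isProbabilityMeasure_map (hXae i)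
  rw [← integral_map (aemeasurable_pi_lambda _ hXae) Measurable.of_discrete.aestronglyMeasurable,
    hind.map_fun_eq_pi_map hXae, integral_fintype .of_finite]
  refine Finset.sum_congr rfl fun x _ => ?_
  rw [smul_eq_mul, measureReal_def, ← Set.univ_pi_singleton, Measure.pi_pi, ENNReal.toReal_prod]
  congr 1
  refine Finset.prod_congr rfl fun i _ => ?_
  rw [Measure.map_apply (hX i) (measurableSet_singleton _), measureReal_def]

theorem measureReal_preimage_false {X : Ω → Bool} (hX : Measurable X) :
    μ.real (X ⁻¹' {false}) = 1 - μ.real (X ⁻¹' {true}) := by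
  rw [← probReal_compl_eq_one_sub (hX (measurableSet_singleton _)), ← Set.preimage_compl,
    Bool.compl_singleton, Bool.not_true]

theorem integral_indicator_inv_count_rpow {X : Fin 3 → Ω → Bool} (hX : ∀ i, Measurable (X i))
    (hind : iIndepFun X μ) {α : ℝ} (hα : 0 < α) :
    ∫ ω, (if X 0 ω then ((∑ i, if X i ω then 1 else 0 : ℕ) : ℝ)⁻¹ else 0) ^ α ∂μ
      = μ.real (X 0 ⁻¹' {true}) *
        ((1 - μ.real (X 1 ⁻¹' {true})) * (1 - μ.real (X 2 ⁻¹' {true}))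
          + (μ.real (X 1 ⁻¹' {true}) * (1 - μ.real (X 2 ⁻¹' {true}))
            + (1 - μ.real (X 1 ⁻¹' {true})) * μ.real (X 2 ⁻¹' {true})) * 2⁻¹ ^ α
          + μ.real (X 1 ⁻¹' {true}) * μ.real (X 2 ⁻¹' {true}) * 3⁻¹ ^ α) := by
  rw [integral_comp_eq_sum_prod_of_iIndepFun hX hind
    (fun x => (if x 0 then ((∑ i, if x i then 1 else 0 : ℕ) : ℝ)⁻¹ else 0) ^ α)]
  simp only [Fintype.sum_fin_three_pi, Fintype.sum_bool, Fin.prod_univ_three, Fin.sum_univ_three,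
    Matrix.cons_val_zero, Matrix.cons_val_one, Matrix.cons_val_two, Matrix.head_cons,
    Matrix.tail_cons, measureReal_preimage_false (hX _)]
  norm_num [zero_rpow hα.ne']
  ring

end Independence

theorem monotoneOn_add_sq_sub_pow_three :
    MonotoneOn (fun c : ℝ => c + c ^ 2 - c ^ 3) (Set.Icc 0 1) := by
  rintro c ⟨hc0, hc1⟩ d ⟨hd0, hd1⟩ hcd
  have hfactor : (d + d ^ 2 - d ^ 3) - (c + c ^ 2 - c ^ 3)
      = (d - c) * ((1 - d) * (1 + c + d) + (d - c) + c * (1 - c)) := by ring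
  have : 0 ≤ (d - c) * ((1 - d) * (1 + c + d) + (d - c) + c * (1 - c)) := by
    have := sub_nonneg.2 hcd
    have := sub_nonneg.2 hc1
    have := sub_nonneg.2 hd1
    positivity
  linarith

section Polynomial

variable {u v : ℝ}

theorem monotoneOn_one_add_mul_add_mul_pow_three (hu : 1 ≤ u) (huv : u ≤ v) :
    MonotoneOn (fun c : ℝ => 1 + (u - 1) * (c + c ^ 2 - c ^ 3) + (v - u) * c ^ 3)
      (Set.Icc 0 1) := by
  intro c hc d hd hcd
  have h1 := monotoneOn_add_sq_sub_pow_three hc hd hcd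
  have h3 : c ^ 3 ≤ d ^ 3 := pow_le_pow_left₀ hc.1 hcd 3
  linarith [mul_le_mul_of_nonneg_left h1 (sub_nonneg.2 hu),
    mul_le_mul_of_nonneg_left h3 (sub_nonneg.2 huv)]

theorem antitoneOn_one_add_mul_add_mul_pow_three (hu : u ≤ 1) (huv : v ≤ u) :
    AntitoneOn (fun c : ℝ => 1 + (u - 1) * (c + c ^ 2 - c ^ 3) + (v - u) * c ^ 3)
      (Set.Icc 0 1) := by
  intro c hc d hd hcd
  have h1 := monotoneOn_add_sq_sub_pow_three hc hd hcd
  have h3 : c ^ 3 ≤ d ^ 3 := pow_le_pow_left₀ hc.1 hcd 3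
  linarith [mul_le_mul_of_nonpos_left h1 (sub_nonpos.2 hu),
    mul_le_mul_of_nonpos_left h3 (sub_nonpos.2 huv)]

end Polynomial

theorem stmt_15_general {Ω : Type*} [MeasurableSpace Ω] (μ : Measure Ω) [IsProbabilityMeasure μ]
    (b : ℝ)
    (E : Fin 3 → Fin 3 → Ω → Bool) (hEmeas : ∀ i j, Measurable (E i j))
    (hindep : iIndepFun (fun (pr : Fin 3 × Fin 3) ω => E pr.1 pr.2 ω) μ)
    (hp : ∀ i j, (μ {ω | E i j ω = true}).toReal
      = ![![1, b, b ^ 2], ![b ^ 2, 1, b], ![b, b ^ 2, 1]] i j)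
    (deg : Ω → Fin 3 → ℕ)
    (hdeg : ∀ ω j, deg ω j = ∑ i, if E i j ω then 1 else 0)
    (α : ℝ) (hα : 0 < α) :
    (∑ j, ∫ ω, (if E 0 j ω then ((deg ω j : ℝ))⁻¹ else 0) ^ α ∂μ
        = 1 + b * ((2 : ℝ) ^ (1 - α) - 1) + b ^ 2 * ((2 : ℝ) ^ (1 - α) - 1)
          + b ^ 3 * ((3 : ℝ) ^ (1 - α) + 1 - (2 : ℝ) ^ (2 - α))) ∧
    (1 < α → AntitoneOn
      (fun c : ℝ => 1 + c * ((2 : ℝ) ^ (1 - α) - 1) + c ^ 2 * ((2 : ℝ) ^ (1 - α) - 1)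
        + c ^ 3 * ((3 : ℝ) ^ (1 - α) + 1 - (2 : ℝ) ^ (2 - α)))
      (Set.Icc 0 1)) ∧
    (α < 1 → MonotoneOn
      (fun c : ℝ => 1 + c * ((2 : ℝ) ^ (1 - α) - 1) + c ^ 2 * ((2 : ℝ) ^ (1 - α) - 1)
        + c ^ 3 * ((3 : ℝ) ^ (1 - α) + 1 - (2 : ℝ) ^ (2 - α)))
      (Set.Icc 0 1)) := by
  have hC : (fun c : ℝ => 1 + c * ((2 : ℝ) ^ (1 - α) - 1) + c ^ 2 * ((2 : ℝ) ^ (1 - α) - 1)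
        + c ^ 3 * ((3 : ℝ) ^ (1 - α) + 1 - (2 : ℝ) ^ (2 - α)))
      = fun c => 1 + (2 ^ (1 - α) - 1) * (c + c ^ 2 - c ^ 3)
        + (3 ^ (1 - α) - 2 ^ (1 - α)) * c ^ 3 := by
    funext c
    rw [show (2 : ℝ) - α = 1 + (1 - α) by ring, rpow_add two_pos, rpow_one]
    ring
  refine ⟨?_, fun hα1 => ?_, fun hα1 => ?_⟩
  · let p i j := μ.real (E i j ⁻¹' {true})
    have hcol : ∀ j, ∫ ω, (if E 0 j ω then ((deg ω j : ℝ))⁻¹ else 0) ^ α ∂μ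
        = p 0 j * ((1 - p 1 j) * (1 - p 2 j) + (p 1 j * (1 - p 2 j) + (1 - p 1 j) * p 2 j)
          * 2⁻¹ ^ α + p 1 j * p 2 j * 3⁻¹ ^ α) := by
      intro j
      simp_rw [hdeg]
      exact integral_indicator_inv_count_rpow (fun i => hEmeas i j)
        (hindep.precomp (Prod.mk_left_injective j)) hα
    have hpb : ∀ i j, p i j = ![![1, b, b ^ 2], ![b ^ 2, 1, b], ![b, b ^ 2, 1]] i j := hp
    simp only [Fin.sum_univ_three, hcol, hpb, Matrix.cons_val_zero, Matrix.cons_val_one,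
      Matrix.cons_val_two, Matrix.head_cons, Matrix.tail_cons, inv_rpow zero_le_two,
      inv_rpow zero_le_three, rpow_sub two_pos, rpow_sub three_pos, rpow_one, rpow_two]
    ring
  · rw [hC]
    exact antitoneOn_one_add_mul_add_mul_pow_three
      (rpow_le_one_of_one_le_of_nonpos one_le_two (by linarith))
      (rpow_le_rpow_of_nonpos two_pos (by norm_num) (by linarith))
  · rw [hC]
    exact monotoneOn_one_add_mul_add_mul_pow_three (one_le_rpow one_le_two (by linarith))
      (rpow_le_rpow zero_le_two (by norm_num) (by linarith))

/-- Toy 3×3 model with edge probability matrix with rows `(1, b, b²)`,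
`(b², 1, b)`, `(b, b², 1)` and `A_{ij} = 𝟙(i~j)/deg(j)`, `K_j = 1`. The individual
constant of agent 1 equals
`C¹_ind(b) = 1 + b(2^{1−α} − 1) + b²(2^{1−α} − 1) + b³(3^{1−α} + 1 − 2^{2−α})`,
and this function of `b` is antitone on `[0,1]` if `α > 1` and monotone if `α < 1`. -/
theorem stmt_15 {Ω : Type*} [MeasurableSpace Ω] (μ : Measure Ω) [IsProbabilityMeasure μ]
    (b : ℝ) (hb : b ∈ Set.Icc (0 : ℝ) 1)
    (E : Fin 3 → Fin 3 → Ω → Bool) (hEmeas : ∀ i j, Measurable (E i j))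
    (hindep : iIndepFun (fun (pr : Fin 3 × Fin 3) ω => E pr.1 pr.2 ω) μ)
    (hp : ∀ i j, (μ {ω | E i j ω = true}).toReal
      = ![![1, b, b ^ 2], ![b ^ 2, 1, b], ![b, b ^ 2, 1]] i j)
    (deg : Ω → Fin 3 → ℕ)
    (hdeg : ∀ ω j, deg ω j = ∑ i, if E i j ω then 1 else 0)
    (α : ℝ) (hα : 0 < α) :
    (∑ j, ∫ ω, (if E 0 j ω then ((deg ω j : ℝ))⁻¹ else 0) ^ α ∂μ
        = 1 + b * ((2 : ℝ) ^ (1 - α) - 1) + b ^ 2 * ((2 : ℝ) ^ (1 - α) - 1)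
          + b ^ 3 * ((3 : ℝ) ^ (1 - α) + 1 - (2 : ℝ) ^ (2 - α))) ∧
    (1 < α → AntitoneOn
      (fun c : ℝ => 1 + c * ((2 : ℝ) ^ (1 - α) - 1) + c ^ 2 * ((2 : ℝ) ^ (1 - α) - 1)
        + c ^ 3 * ((3 : ℝ) ^ (1 - α) + 1 - (2 : ℝ) ^ (2 - α)))
      (Set.Icc 0 1)) ∧
    (α < 1 → MonotoneOn
      (fun c : ℝ => 1 + c * ((2 : ℝ) ^ (1 - α) - 1) + c ^ 2 * ((2 : ℝ) ^ (1 - α) - 1)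
        + c ^ 3 * ((3 : ℝ) ^ (1 - α) + 1 - (2 : ℝ) ^ (2 - α)))
      (Set.Icc 0 1)) :=
  stmt_15_general μ b E hEmeas hindep hp deg hdeg α hα
end
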